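/- arXiv:2101.10046 — 2 statements merged into one kernel-verified Lean document; each statement's English description precedes it below -/
import Mathlib

section
/- The Jacobi triple product identity: for z ∈ ℂ and τ in the upper half-plane, i·q^{1/8}·ζ^{1/2}·∑_{n∈ℤ} (-1)^n q^{(n²+n)/2} ζ^n = i·ζ^{1/2}·q^{1/8}·∏_{n≥1}(1-q^n)(1-ζq^n)(1-ζ^{-1}q^{n-1}), where q = e^{2πiτ} and ζ = e^{2πiz}. In particular the sum and product representations of ϑ(z;τ) agree. -/
open Complex Filter

noncomputable def jTheta (z τ : ℂ) : ℂ :=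
  Complex.I * Complex.exp (Real.pi * Complex.I * z) *
    Complex.exp (Real.pi * Complex.I * τ / 4) *
    ∏' n : ℕ,
      ((1 - Complex.exp (2 * Real.pi * Complex.I * τ) ^ (n + 1)) *
        (1 - Complex.exp (2 * Real.pi * Complex.I * z) *
          Complex.exp (2 * Real.pi * Complex.I * τ) ^ (n + 1)) *
        (1 - (Complex.exp (2 * Real.pi * Complex.I * z))⁻¹ *
          Complex.exp (2 * Real.pi * Complex.I * τ) ^ n))

noncomputable def dedekindEta (τ : ℂ) : ℂ :=
  Complex.exp (Real.pi * Complex.I * τ / 12) *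
    ∏' n : ℕ, (1 - Complex.exp (2 * Real.pi * Complex.I * τ) ^ (n + 1))


noncomputable def jtpP (q : ℂ) (m : ℕ) : ℂ := ∏ k ∈ Finset.range m, (1 - q ^ (k + 1))

noncomputable def jtpB (q : ℂ) (m j : ℕ) : ℂ :=
  if j ≤ m then jtpP q m / (jtpP q j * jtpP q (m - j)) else 0

section alg

variable {q : ℂ} (hq : ‖q‖ < 1)

include hq in
lemma jtp_one_sub_ne (k : ℕ) : (1 : ℂ) - q ^ (k + 1) ≠ 0 := by
  have h1 : ‖q ^ (k + 1)‖ < 1 := by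
    rw [norm_pow]
    calc ‖q‖ ^ (k+1) ≤ ‖q‖ ^ 1 := pow_le_pow_of_le_one (norm_nonneg q) hq.le (by omega)
      _ < 1 := by simpa using hq
  intro h
  rw [sub_eq_zero] at h
  rw [← h] at h1
  simp at h1

include hq in
lemma jtpP_ne_zero (m : ℕ) : jtpP q m ≠ 0 :=
  Finset.prod_ne_zero_iff.2 fun k _ => jtp_one_sub_ne hq k

lemma jtpP_succ (m : ℕ) : jtpP q (m + 1) = jtpP q m * (1 - q ^ (m + 1)) :=
  Finset.prod_range_succ _ _

@[simp] lemma jtpP_zero : jtpP q 0 = 1 := Finset.prod_range_zero _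

include hq in
lemma jtpB_zero (m : ℕ) : jtpB q m 0 = 1 := by
  simp [jtpB, jtpP_ne_zero hq m]

include hq in
lemma jtpB_self (m : ℕ) : jtpB q m m = 1 := by
  simp [jtpB, jtpP_ne_zero hq m]

lemma jtpB_of_gt {m j : ℕ} (h : m < j) : jtpB q m j = 0 := by
  simp [jtpB, Nat.not_le.2 h]

include hq in
lemma jtpB_pascal {m j : ℕ} (hjm : j ≤ m) :
    jtpB q (m + 1) (j + 1) = jtpB q m (j + 1) + q ^ (m - j) * jtpB q m j := by
  rcases eq_or_lt_of_le hjm with rfl | hlt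
  · rw [jtpB_self hq, jtpB_of_gt (by omega), Nat.sub_self, pow_zero, jtpB_self hq]; ring
  · have hj1m : j + 1 ≤ m := hlt
    rw [jtpB, jtpB, jtpB, if_pos (by omega), if_pos hj1m, if_pos hjm]
    have h1 : m + 1 - (j + 1) = m - j := by omega
    have h2 : m - j = (m - (j+1)) + 1 := by omega
    have e1 : jtpP q (m+1) = jtpP q m * (1 - q ^ (m+1)) := jtpP_succ m
    have e2 : jtpP q (m - j) = jtpP q (m - (j+1)) * (1 - q ^ (m - j)) := by
      rw [h2, jtpP_succ, ← h2]
    have e3 : jtpP q (j + 1) = jtpP q j * (1 - q ^ (j+1)) := jtpP_succ j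
    have key : (1 : ℂ) - q ^ (m + 1) = (1 - q ^ (m - j)) + q ^ (m - j) * (1 - q ^ (j + 1)) := by
      have h3 : q ^ (m - j) * q ^ (j + 1) = q ^ (m + 1) := by
        rw [← pow_add]; congr 1; omega
      rw [mul_sub, mul_one, h3]; ring
    rw [h1, e1, e2, e3, key]
    have n0 := jtpP_ne_zero hq m
    have n1 := jtpP_ne_zero hq (m - (j+1))
    have n2 := jtpP_ne_zero hq j
    have n3 := jtp_one_sub_ne hq (m - (j+1))
    have n4 := jtp_one_sub_ne hq j
    have n5 : (1 : ℂ) - q ^ (m - j) ≠ 0 := by rw [h2]; exact jtp_one_sub_ne hq _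
    field_simp

include hq in
lemma jtp_gauss (x : ℂ) (m : ℕ) :
    ∏ k ∈ Finset.range m, (1 + x * q ^ k)
      = ∑ j ∈ Finset.range (m + 1), jtpB q m j * q ^ (j.choose 2) * x ^ j := by
  induction m with
  | zero => simp [jtpB_zero hq]
  | succ m ih =>
      have hc : ∀ i : ℕ, (i+1).choose 2 = i.choose 2 + i := by
        intro i
        rw [Nat.choose_succ_succ]
        simp [Nat.add_comm]
      rw [Finset.prod_range_succ, ih, mul_add, mul_one,
        Finset.sum_range_succ' (fun j => jtpB q (m+1) j * q ^ (j.choose 2) * x ^ j) (m+1)]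
      have step : ∀ i ∈ Finset.range (m+1),
          jtpB q (m+1) (i+1) * q ^ ((i+1).choose 2) * x ^ (i+1)
            = jtpB q m (i+1) * q ^ ((i+1).choose 2) * x ^ (i+1)
              + jtpB q m i * q ^ (i.choose 2) * x ^ i * (x * q ^ m) := by
        intro i hi
        rw [Finset.mem_range, Nat.lt_succ_iff] at hi
        rw [jtpB_pascal hq hi, add_mul, add_mul]
        congr 1
        have hqe : q ^ (m - i) * q ^ ((i+1).choose 2) = q ^ (i.choose 2) * q ^ m := by
          rw [← pow_add, ← pow_add, hc i]
          congr 1; omega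
        calc q ^ (m-i) * jtpB q m i * q ^ ((i+1).choose 2) * x ^ (i+1)
            = jtpB q m i * (q ^ (m-i) * q ^ ((i+1).choose 2)) * x ^ (i+1) := by ring
          _ = jtpB q m i * q ^ (i.choose 2) * x ^ i * (x * q ^ m) := by rw [hqe]; ring
      rw [Finset.sum_congr rfl step, Finset.sum_add_distrib, ← Finset.sum_mul]
      have key : ∑ j ∈ Finset.range (m+1), jtpB q m j * q ^ (j.choose 2) * x ^ j
          = (∑ i ∈ Finset.range (m+1), jtpB q m (i+1) * q ^ ((i+1).choose 2) * x ^ (i+1))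
            + jtpB q m 0 * q ^ ((0:ℕ).choose 2) * x ^ 0 := by
        have h := Finset.sum_range_succ'
          (fun j => jtpB q m j * q ^ (j.choose 2) * x ^ j) (m+1)
        rw [Finset.sum_range_succ
          (fun j => jtpB q m j * q ^ (j.choose 2) * x ^ j) (m+1),
          jtpB_of_gt (show m < m+1 by omega)] at h
        simp only [zero_mul] at h
        rw [add_zero] at h
        exact h
      rw [key, jtpB_zero hq, jtpB_zero hq]
      ring

end alg

noncomputable def jtpG (r ζ : ℂ) (n : ℤ) : ℂ := (-1 : ℂ) ^ n * ζ ^ n * r ^ (n ^ 2 + n)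

lemma jtp_zpow_prod {a : ℂ} (ha : a ≠ 0) {ι : Type*} (s : Finset ι) (f : ι → ℤ) :
    ∏ i ∈ s, a ^ f i = a ^ (∑ i ∈ s, f i) := by
  classical
  induction s using Finset.induction with
  | empty => simp
  | insert _ _ h ih => rw [Finset.prod_insert h, Finset.sum_insert h, zpow_add₀ ha, ih]

lemma jtp_choose_two (j : ℕ) : ((j.choose 2 : ℕ) : ℤ) * 2 = (j : ℤ) ^ 2 - j := by
  have h : j.choose 2 * 2 = j * (j - 1) := by
    rw [Nat.choose_two_right]
    exact Nat.div_mul_cancel (Nat.even_mul_pred_self j).two_dvd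
  rcases j with _ | n
  · simp
  · have h2 : (n + 1).choose 2 * 2 = (n + 1) * n := by simpa using h
    have h' : (((n + 1).choose 2 : ℕ) : ℤ) * 2 = ((n : ℤ) + 1) * n := by exact_mod_cast h2
    push_cast at h' ⊢
    linear_combination h'

section star

variable {q r ζ : ℂ} (hq : ‖q‖ < 1) (hqr : r ^ 2 = q) (hr : r ≠ 0) (hζ : ζ ≠ 0)

include hq hqr hr hζ in
lemma jtp_star (N : ℕ) :
    ∏ j ∈ Finset.range N, ((1 - ζ * q ^ (j + 1)) * (1 - ζ⁻¹ * q ^ j))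
      = ∑ j ∈ Finset.range (2 * N + 1), jtpB q (2 * N) j * jtpG r ζ ((j : ℤ) - N) := by
  have hm1 : (-1 : ℂ) ≠ 0 := by norm_num
  set c : ℂ := (-1 : ℂ) ^ (N : ℤ) * ζ ^ (N : ℤ) * r ^ ((N : ℤ) - (N : ℤ) ^ 2) with hcdef
  have hc : c ≠ 0 := by
    exact mul_ne_zero (mul_ne_zero (zpow_ne_zero _ hm1) (zpow_ne_zero _ hζ))
      (zpow_ne_zero _ hr)
  set x : ℂ := -ζ * r ^ (2 - 2 * (N : ℤ)) with hxdef
  -- term identity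
  have key : ∀ j : ℕ, q ^ (j.choose 2) * x ^ j = c * jtpG r ζ ((j : ℤ) - N) := by
    intro j
    have e1 : q ^ (j.choose 2) = r ^ ((j : ℤ) ^ 2 - j) := by
      rw [← hqr, ← pow_mul, ← zpow_natCast r]
      congr 1
      push_cast
      linear_combination jtp_choose_two j
    have e2 : x ^ j = (-1 : ℂ) ^ (j : ℤ) * ζ ^ (j : ℤ) * r ^ ((2 - 2 * (N : ℤ)) * j) := by
      rw [hxdef, mul_pow, neg_pow, ← zpow_natCast (-1 : ℂ) j, ← zpow_natCast ζ j,
        ← zpow_natCast (r ^ (2 - 2 * (N : ℤ))) j, ← zpow_mul]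
    calc q ^ (j.choose 2) * x ^ j
        = (-1 : ℂ) ^ (j : ℤ) * ζ ^ (j : ℤ) * (r ^ ((j : ℤ) ^ 2 - j) * r ^ ((2 - 2 * (N : ℤ)) * j)) := by
          rw [e1, e2]; ring
      _ = (-1 : ℂ) ^ (j : ℤ) * ζ ^ (j : ℤ) * r ^ ((j : ℤ) ^ 2 - j + (2 - 2 * (N : ℤ)) * j) := by
          rw [← zpow_add₀ hr]
      _ = ((-1 : ℂ) ^ (N : ℤ) * (-1 : ℂ) ^ ((j : ℤ) - N)) * (ζ ^ (N : ℤ) * ζ ^ ((j : ℤ) - N))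
            * (r ^ ((N : ℤ) - (N : ℤ) ^ 2) * r ^ (((j : ℤ) - N) ^ 2 + ((j : ℤ) - N))) := by
          rw [← zpow_add₀ hm1, ← zpow_add₀ hζ, ← zpow_add₀ hr]
          rw [show (N : ℤ) + ((j : ℤ) - N) = (j : ℤ) by ring,
            show (N : ℤ) - (N : ℤ) ^ 2 + (((j : ℤ) - N) ^ 2 + ((j : ℤ) - N))
              = (j : ℤ) ^ 2 - j + (2 - 2 * (N : ℤ)) * j by ring]
      _ = c * jtpG r ζ ((j : ℤ) - N) := by rw [hcdef, jtpG]; ring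
  -- product side
  have hfac : ∀ k : ℕ, 1 + x * q ^ k = 1 - ζ * r ^ (2 * (k : ℤ) + 2 - 2 * N) := by
    intro k
    have hqk : (q : ℂ) ^ k = r ^ (2 * (k : ℤ)) := by
      rw [← hqr, ← pow_mul, ← zpow_natCast r]
      congr 1 <;> omega
    rw [hxdef, hqk]
    rw [show -ζ * r ^ (2 - 2 * (N : ℤ)) * r ^ (2 * (k : ℤ))
        = -(ζ * (r ^ (2 - 2 * (N : ℤ)) * r ^ (2 * (k : ℤ)))) by ring,
      ← zpow_add₀ hr,
      show 2 - 2 * (N : ℤ) + 2 * (k : ℤ) = 2 * (k : ℤ) + 2 - 2 * N by ring]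
    ring
  have hfirst : ∀ k, k ∈ Finset.range N → (1 : ℂ) - ζ * r ^ (2 * (k : ℤ) + 2 - 2 * N)
      = (-ζ * r ^ (2 * (k : ℤ) + 2 - 2 * N)) * (1 - ζ⁻¹ * q ^ (N - 1 - k)) := by
    intro k hk
    rw [Finset.mem_range] at hk
    have hqpow : (q : ℂ) ^ (N - 1 - k) = r ^ (2 * (N : ℤ) - 2 - 2 * k) := by
      rw [← hqr, ← pow_mul, ← zpow_natCast r]
      congr 1 <;> omega
    have hrr : r ^ (2 * (k : ℤ) + 2 - 2 * N) * r ^ (2 * (N : ℤ) - 2 - 2 * k) = 1 := by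
      rw [← zpow_add₀ hr, show 2 * (k : ℤ) + 2 - 2 * N + (2 * (N : ℤ) - 2 - 2 * k) = 0 by ring,
        zpow_zero]
    rw [hqpow]
    calc (1 : ℂ) - ζ * r ^ (2 * (k : ℤ) + 2 - 2 * N)
        = -(ζ * r ^ (2 * (k : ℤ) + 2 - 2 * N))
          + (ζ * ζ⁻¹) * (r ^ (2 * (k : ℤ) + 2 - 2 * N) * r ^ (2 * (N : ℤ) - 2 - 2 * k)) := by
          rw [hrr, mul_inv_cancel₀ hζ]; ring
      _ = (-ζ * r ^ (2 * (k : ℤ) + 2 - 2 * N)) * (1 - ζ⁻¹ * r ^ (2 * (N : ℤ) - 2 - 2 * k)) := by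
          ring
  have hsum : (∑ k ∈ Finset.range N, (2 * (k : ℤ) + 2 - 2 * N)) = (N : ℤ) - (N : ℤ) ^ 2 := by
    have h1 : ((∑ i ∈ Finset.range N, i) * 2 : ℕ) = N * (N - 1) := Finset.sum_range_id_mul_two N
    have h2 : ((∑ i ∈ Finset.range N, (i : ℤ))) * 2 = (N : ℤ) * ((N : ℤ) - 1) := by
      rcases Nat.eq_zero_or_pos N with rfl | hN
      · simp
      · have : ((N * (N - 1) : ℕ) : ℤ) = (N : ℤ) * ((N : ℤ) - 1) := by
          push_cast [Nat.cast_sub hN]; ring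
        rw [← this, ← h1]; push_cast; ring
    have e : ∀ k ∈ Finset.range N, (2 * (k : ℤ) + 2 - 2 * N) = 2 * (k : ℤ) + (2 - 2 * N) :=
      fun _ _ => by ring
    rw [Finset.sum_congr rfl e, Finset.sum_add_distrib, Finset.sum_const, Finset.card_range,
      ← Finset.mul_sum, nsmul_eq_mul]
    linear_combination h2
  have hnegprod : (∏ k ∈ Finset.range N, (-ζ * r ^ (2 * (k : ℤ) + 2 - 2 * N))) = c := by
    rw [Finset.prod_mul_distrib, Finset.prod_const, jtp_zpow_prod hr, hsum, Finset.card_range]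
    rw [neg_pow, hcdef, ← zpow_natCast (-1 : ℂ) N, ← zpow_natCast ζ N]
  have prodside : (∏ k ∈ Finset.range (2 * N), (1 + x * q ^ k))
      = c * ∏ j ∈ Finset.range N, ((1 - ζ * q ^ (j + 1)) * (1 - ζ⁻¹ * q ^ j)) := by
    rw [Finset.prod_congr rfl (fun k _ => hfac k), two_mul, Finset.prod_range_add]
    have hsecond : ∀ i, i ∈ Finset.range N →
        (1 : ℂ) - ζ * r ^ (2 * ((N + i : ℕ) : ℤ) + 2 - 2 * N) = 1 - ζ * q ^ (i + 1) := by
      intro i _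
      have : (q : ℂ) ^ (i + 1) = r ^ (2 * ((N + i : ℕ) : ℤ) + 2 - 2 * N) := by
        rw [← hqr, ← pow_mul, ← zpow_natCast r]
        congr 1 <;> omega
      rw [this]
    rw [Finset.prod_congr rfl hsecond, Finset.prod_congr rfl hfirst, Finset.prod_mul_distrib,
      hnegprod]
    have hreflect : (∏ k ∈ Finset.range N, ((1 : ℂ) - ζ⁻¹ * q ^ (N - 1 - k)))
        = ∏ k ∈ Finset.range N, ((1 : ℂ) - ζ⁻¹ * q ^ k) :=
      Finset.prod_range_reflect (fun k => (1 : ℂ) - ζ⁻¹ * q ^ k) N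
    rw [hreflect, Finset.prod_mul_distrib]
    ring
  have gauss := jtp_gauss hq x (2 * N)
  rw [prodside] at gauss
  have : (∑ j ∈ Finset.range (2 * N + 1), jtpB q (2 * N) j * q ^ (j.choose 2) * x ^ j)
      = c * ∑ j ∈ Finset.range (2 * N + 1), jtpB q (2 * N) j * jtpG r ζ ((j : ℤ) - N) := by
    rw [Finset.mul_sum]
    refine Finset.sum_congr rfl fun j _ => ?_
    rw [mul_assoc, key j]; ring
  rw [this] at gauss
  exact mul_left_cancel₀ hc gauss

end star

open scoped Topology

section analytic

lemma jtp_summable_log {f : ℕ → ℂ} (hs : Summable fun n => ‖f n - 1‖) :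
    Summable fun n => Complex.log (f n) := by
  have h0 : Tendsto (fun n => ‖f n - 1‖) atTop (𝓝 0) := hs.tendsto_atTop_zero
  have hev : ∀ᶠ n in atTop, ‖Complex.log (f n)‖ ≤ (3 / 2) * ‖f n - 1‖ := by
    filter_upwards [h0.eventually (gt_mem_nhds (by norm_num : (0 : ℝ) < 1 / 2))] with n hn
    have h := Complex.norm_log_one_add_half_le_self (z := f n - 1) (by simpa using hn.le)
    have e : 1 + (f n - 1) = f n := by ring
    rwa [e] at h
  exact Summable.of_norm_bounded_eventually_nat (hs.mul_left (3 / 2)) hev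

lemma jtp_hasProd {f : ℕ → ℂ} (h0 : ∀ n, f n ≠ 0) (hs : Summable fun n => ‖f n - 1‖) :
    HasProd f (∏' n, f n) ∧ (∏' n, f n) ≠ 0 := by
  have hlog := jtp_summable_log hs
  have hp := Complex.hasProd_of_hasSum_log h0 hlog.hasSum
  have he := Complex.cexp_tsum_eq_tprod h0 hlog
  have he' := he
  rw [he] at hp
  constructor
  · exact hp
  · rw [← he']
    exact Complex.exp_ne_zero _

lemma jtp_hasProd_zero {f : ℕ → ℂ} {k : ℕ} (hk : f k = 0) : HasProd f 0 := by
  have hev : (fun s : Finset ℕ => ∏ i ∈ s, f i) =ᶠ[atTop] (fun _ => 0) := by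
    filter_upwards [eventually_ge_atTop {k}] with s hs
    exact Finset.prod_eq_zero (hs (Finset.mem_singleton_self k)) hk
  exact (tendsto_congr' hev).2 tendsto_const_nhds

lemma jtp_hasProd_tprod {f : ℕ → ℂ} (hs : Summable fun n => ‖f n - 1‖) :
    HasProd f (∏' n, f n) := by
  by_cases h0 : ∀ n, f n ≠ 0
  · exact (jtp_hasProd h0 hs).1
  · push_neg at h0
    obtain ⟨k, hk⟩ := h0
    have hp := jtp_hasProd_zero (f := f) hk
    rw [hp.tprod_eq]
    exact hp

lemma jtp_bounds {P : ℕ → ℂ} {D : ℂ} (h : Tendsto P atTop (𝓝 D)) (hD : D ≠ 0) :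
    ∃ C : ℝ, 0 < C ∧ ∀ m, ‖P m‖ ≤ C ∧ ‖(P m)⁻¹‖ ≤ C := by
  have h1 : Tendsto (fun m => ‖P m‖ + ‖(P m)⁻¹‖) atTop (𝓝 (‖D‖ + ‖D⁻¹‖)) :=
    (h.norm).add ((h.inv₀ hD).norm)
  obtain ⟨C0, hC0⟩ := h1.bddAbove_range
  refine ⟨max C0 1, lt_of_lt_of_le one_pos (le_max_right _ _), fun m => ?_⟩
  have hm : ‖P m‖ + ‖(P m)⁻¹‖ ≤ C0 := hC0 (Set.mem_range_self m)
  constructor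
  · refine le_trans (le_trans ?_ hm) (le_max_left _ _)
    have := norm_nonneg (P m)⁻¹
    linarith
  · refine le_trans (le_trans ?_ hm) (le_max_left _ _)
    have := norm_nonneg (P m)
    linarith

end analytic

section lims

open scoped Topology

variable {q r ζ : ℂ}

lemma jtp_summable_one (hq : ‖q‖ < 1) :
    Summable fun n : ℕ => ‖(1 - q ^ (n + 1)) - 1‖ := by
  have he : ∀ n : ℕ, ‖(1 - q ^ (n + 1)) - 1‖ = ‖q‖ * ‖q‖ ^ n := by
    intro n
    rw [show (1 : ℂ) - q ^ (n + 1) - 1 = -(q * q ^ n) by rw [pow_succ]; ring]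
    rw [norm_neg, norm_mul, norm_pow]
  exact (((summable_geometric_of_lt_one (norm_nonneg q) hq).mul_left ‖q‖).congr
    fun n => (he n).symm)

lemma jtp_summable_triple (hq : ‖q‖ < 1) :
    Summable fun n : ℕ =>
      ‖(1 - q ^ (n + 1)) * (1 - ζ * q ^ (n + 1)) * (1 - ζ⁻¹ * q ^ n) - 1‖ := by
  rw [summable_norm_iff]
  have he : (fun n : ℕ => (1 - q ^ (n + 1)) * (1 - ζ * q ^ (n + 1)) * (1 - ζ⁻¹ * q ^ n) - 1)
      = fun n => (-(q + ζ * q + ζ⁻¹)) * q ^ n + (ζ * q ^ 2 + q * ζ⁻¹ + ζ * q * ζ⁻¹) * (q ^ 2) ^ n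
          + (-(ζ * q ^ 2 * ζ⁻¹)) * (q ^ 3) ^ n := by
    funext n
    ring
  rw [he]
  have h2 : ‖q ^ 2‖ < 1 := by
    rw [norm_pow]; exact pow_lt_one₀ (norm_nonneg q) hq (by norm_num)
  have h3 : ‖q ^ 3‖ < 1 := by
    rw [norm_pow]; exact pow_lt_one₀ (norm_nonneg q) hq (by norm_num)
  exact (((summable_geometric_of_norm_lt_one hq).mul_left _).add
    ((summable_geometric_of_norm_lt_one h2).mul_left _)).add
    ((summable_geometric_of_norm_lt_one h3).mul_left _)

lemma jtpP_tendsto (hq : ‖q‖ < 1) :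
    Tendsto (jtpP q) atTop (𝓝 (∏' k : ℕ, (1 - q ^ (k + 1)))) := by
  have h0 : ∀ n : ℕ, (1 : ℂ) - q ^ (n + 1) ≠ 0 := fun n => jtp_one_sub_ne hq n
  have hp := (jtp_hasProd h0 (jtp_summable_one hq)).1
  exact hp.tendsto_prod_nat

lemma jtpD_ne_zero (hq : ‖q‖ < 1) : (∏' k : ℕ, (1 - q ^ (k + 1))) ≠ 0 :=
  (jtp_hasProd (fun n => jtp_one_sub_ne hq n) (jtp_summable_one hq)).2

lemma jtpB_tendsto (hq : ‖q‖ < 1) (n : ℤ) :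
    Tendsto (fun N : ℕ => jtpB q (2 * N) ((n + (N : ℤ)).toNat)) atTop
      (𝓝 (∏' k : ℕ, (1 - q ^ (k + 1)))⁻¹) := by
  set D := ∏' k : ℕ, (1 - q ^ (k + 1)) with hDdef
  have hD : D ≠ 0 := jtpD_ne_zero hq
  have hPt : Tendsto (jtpP q) atTop (𝓝 D) := jtpP_tendsto hq
  have h2N : Tendsto (fun N : ℕ => jtpP q (2 * N)) atTop (𝓝 D) :=
    hPt.comp (tendsto_atTop_mono (fun N => by simp only [id_eq]; omega) tendsto_id)
  have hj : Tendsto (fun N : ℕ => (n + (N : ℤ)).toNat) atTop atTop :=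
    tendsto_atTop_mono (fun N => (by omega : N - n.natAbs ≤ (n + (N : ℤ)).toNat))
      (tendsto_sub_atTop_nat n.natAbs)
  have hk : Tendsto (fun N : ℕ => 2 * N - (n + (N : ℤ)).toNat) atTop atTop :=
    tendsto_atTop_mono (fun N => (by omega : N - n.natAbs ≤ 2 * N - (n + (N : ℤ)).toNat))
      (tendsto_sub_atTop_nat n.natAbs)
  have heq : (fun N : ℕ => jtpB q (2 * N) ((n + (N : ℤ)).toNat))
      =ᶠ[atTop] fun N => jtpP q (2 * N)
        * ((jtpP q ((n + (N : ℤ)).toNat) * jtpP q (2 * N - (n + (N : ℤ)).toNat)))⁻¹ := by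
    filter_upwards [eventually_ge_atTop n.natAbs] with N hN
    rw [jtpB, if_pos (by omega), div_eq_mul_inv]
  have hlim : Tendsto (fun N : ℕ => jtpP q (2 * N)
      * ((jtpP q ((n + (N : ℤ)).toNat) * jtpP q (2 * N - (n + (N : ℤ)).toNat)))⁻¹) atTop
      (𝓝 (D * (D * D)⁻¹)) :=
    h2N.mul (((hPt.comp hj).mul (hPt.comp hk)).inv₀ (mul_ne_zero hD hD))
  have hDD : D * (D * D)⁻¹ = D⁻¹ := by field_simp
  rw [tendsto_congr' heq, ← hDD]
  exact hlim

lemma jtpB_bound (hq : ‖q‖ < 1) : ∃ C : ℝ, 0 < C ∧ ∀ m j, ‖jtpB q m j‖ ≤ C := by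
  obtain ⟨C, hC0, hC⟩ := jtp_bounds (jtpP_tendsto hq) (jtpD_ne_zero hq)
  refine ⟨C ^ 3, by positivity, fun m j => ?_⟩
  by_cases h : j ≤ m
  · rw [jtpB, if_pos h, div_eq_mul_inv, mul_inv]
    rw [norm_mul, norm_mul]
    calc ‖jtpP q m‖ * (‖(jtpP q j)⁻¹‖ * ‖(jtpP q (m - j))⁻¹‖)
        ≤ C * (C * C) := by
          refine mul_le_mul (hC m).1 ?_ (by positivity) hC0.le
          exact mul_le_mul (hC j).2 (hC (m - j)).2 (norm_nonneg _) hC0.le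
      _ = C ^ 3 := by ring
  · rw [jtpB, if_neg h, norm_zero]
    positivity

end lims

section key

open scoped Topology

variable {q r ζ : ℂ}

lemma jtp_key (hq : ‖q‖ < 1) (hqr : r ^ 2 = q) (hr : r ≠ 0) (hζ : ζ ≠ 0)
    (hgs : Summable fun n : ℤ => ‖jtpG r ζ n‖) :
    ∑' n : ℤ, jtpG r ζ n
      = ∏' n : ℕ, ((1 - q ^ (n + 1)) * (1 - ζ * q ^ (n + 1)) * (1 - ζ⁻¹ * q ^ n)) := by
  classical
  set D := ∏' k : ℕ, (1 - q ^ (k + 1)) with hDdef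
  have hD : D ≠ 0 := jtpD_ne_zero hq
  set g : ℤ → ℂ := jtpG r ζ with hgdef
  set F : ℕ → ℤ → ℂ := fun N n =>
    if n.natAbs ≤ N then jtpB q (2 * N) ((n + (N : ℤ)).toNat) * g n else 0 with hFdef
  -- Step 1 : finite identity
  have step1 : ∀ N : ℕ, (∑' n : ℤ, F N n)
      = ∏ j ∈ Finset.range N, ((1 - ζ * q ^ (j + 1)) * (1 - ζ⁻¹ * q ^ j)) := by
    intro N
    have hsupp : ∀ n : ℤ, n ∉ Finset.Icc (-(N : ℤ)) (N : ℤ) → F N n = 0 := by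
      intro n hn
      rw [Finset.mem_Icc] at hn
      rw [hFdef]
      simp only
      rw [if_neg (by omega)]
    rw [tsum_eq_sum hsupp, jtp_star hq hqr hr hζ N]
    refine Finset.sum_nbij' (fun n => (n + (N : ℤ)).toNat) (fun j => (j : ℤ) - N)
      ?_ ?_ ?_ ?_ ?_
    · intro a ha
      rw [Finset.mem_Icc] at ha
      rw [Finset.mem_range]
      omega
    · intro a ha
      rw [Finset.mem_range] at ha
      rw [Finset.mem_Icc]
      omega
    · intro a ha
      rw [Finset.mem_Icc] at ha
      omega
    · intro a ha
      rw [Finset.mem_range] at ha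
      omega
    · intro a ha
      rw [Finset.mem_Icc] at ha
      rw [hFdef]
      dsimp only
      rw [if_pos (by omega)]
      congr 2
      omega
  -- Step 2 : dominated convergence
  obtain ⟨C, hC0, hC⟩ := jtpB_bound (q := q) hq
  have step2 : Tendsto (fun N => ∑' n : ℤ, F N n) atTop (𝓝 (∑' n : ℤ, D⁻¹ * g n)) := by
    refine tendsto_tsum_of_dominated_convergence (bound := fun n => C * ‖g n‖)
      (hgs.mul_left C) (fun n => ?_) ?_
    · have hev : (fun N => F N n) =ᶠ[atTop]
          fun N => jtpB q (2 * N) ((n + (N : ℤ)).toNat) * g n := by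
        filter_upwards [eventually_ge_atTop n.natAbs] with N hN
        rw [hFdef]
        simp only
        rw [if_pos hN]
      rw [tendsto_congr' hev]
      exact (jtpB_tendsto hq n).mul_const (g n)
    · refine Eventually.of_forall fun N => fun n => ?_
      rw [hFdef]
      simp only
      by_cases h : n.natAbs ≤ N
      · rw [if_pos h, norm_mul]
        exact mul_le_mul_of_nonneg_right (hC _ _) (norm_nonneg _)
      · rw [if_neg h, norm_zero]
        positivity
  -- Step 3 : product side
  have htrip := jtp_hasProd_tprod (f := fun n : ℕ =>
    (1 - q ^ (n + 1)) * (1 - ζ * q ^ (n + 1)) * (1 - ζ⁻¹ * q ^ n)) (jtp_summable_triple hq)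
  have step3 := htrip.tendsto_prod_nat
  have hsplit : ∀ N : ℕ, (∏ j ∈ Finset.range N,
      ((1 - q ^ (j + 1)) * (1 - ζ * q ^ (j + 1)) * (1 - ζ⁻¹ * q ^ j)))
      = jtpP q N * ∏ j ∈ Finset.range N, ((1 - ζ * q ^ (j + 1)) * (1 - ζ⁻¹ * q ^ j)) := by
    intro N
    rw [jtpP, ← Finset.prod_mul_distrib]
    refine Finset.prod_congr rfl fun j _ => ?_
    ring
  have step4 : Tendsto (fun N => jtpP q N * (∑' n : ℤ, F N n)) atTop
      (𝓝 (D * (∑' n : ℤ, D⁻¹ * g n))) := (jtpP_tendsto hq).mul step2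
  have step5 : Tendsto (fun N => jtpP q N * (∑' n : ℤ, F N n)) atTop
      (𝓝 (∏' n : ℕ, ((1 - q ^ (n + 1)) * (1 - ζ * q ^ (n + 1)) * (1 - ζ⁻¹ * q ^ n)))) := by
    refine (tendsto_congr fun N => ?_).1 step3
    rw [hsplit N, step1 N]
  have huniq := tendsto_nhds_unique step4 step5
  rw [← huniq, tsum_mul_left, ← mul_assoc, mul_inv_cancel₀ hD, one_mul]

end key

open scoped Topology

theorem jacobi_triple_product' (z τ : ℂ) (hτ : 0 < τ.im) :
    Complex.I * Complex.exp (Real.pi * Complex.I * τ / 4) *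
        Complex.exp (Real.pi * Complex.I * z) *
        ∑' n : ℤ, (-1 : ℂ) ^ n *
          Complex.exp (Real.pi * Complex.I * τ * (n ^ 2 + n)) *
          Complex.exp (2 * Real.pi * Complex.I * z * n)
      = Complex.I * Complex.exp (Real.pi * Complex.I * z) *
        Complex.exp (Real.pi * Complex.I * τ / 4) *
        ∏' n : ℕ,
          ((1 - Complex.exp (2 * Real.pi * Complex.I * τ) ^ (n + 1)) *
            (1 - Complex.exp (2 * Real.pi * Complex.I * z) *
              Complex.exp (2 * Real.pi * Complex.I * τ) ^ (n + 1)) *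
            (1 - (Complex.exp (2 * Real.pi * Complex.I * z))⁻¹ *
              Complex.exp (2 * Real.pi * Complex.I * τ) ^ n)) := by
  classical
  set q : ℂ := Complex.exp (2 * Real.pi * Complex.I * τ) with hqdef
  set ζ : ℂ := Complex.exp (2 * Real.pi * Complex.I * z) with hζdef
  set r : ℂ := Complex.exp (Real.pi * Complex.I * τ) with hrdef
  have hr : r ≠ 0 := Complex.exp_ne_zero _
  have hζ0 : ζ ≠ 0 := Complex.exp_ne_zero _
  have hqr : r ^ 2 = q := by
    rw [hrdef, hqdef, ← Complex.exp_nat_mul]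
    congr 1
    push_cast
    ring
  have hq : ‖q‖ < 1 := by
    rw [hqdef, Complex.norm_exp, Real.exp_lt_one_iff]
    have hre : (2 * (Real.pi : ℂ) * Complex.I * τ).re = -(2 * Real.pi * τ.im) := by
      simp [Complex.mul_re, Complex.mul_im]
    rw [hre]
    have := Real.pi_pos
    nlinarith
  have hterm : ∀ n : ℤ, (-1 : ℂ) ^ n
      * Complex.exp (Real.pi * Complex.I * τ * (n ^ 2 + n))
      * Complex.exp (2 * Real.pi * Complex.I * z * n) = jtpG r ζ n := by
    intro n
    have h2 : Complex.exp (2 * Real.pi * Complex.I * z * n) = ζ ^ n := by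
      rw [hζdef, ← Complex.exp_int_mul]
      congr 1
      ring
    have h3 : Complex.exp (Real.pi * Complex.I * τ * ((n : ℂ) ^ 2 + n))
        = r ^ ((n ^ 2 + n : ℤ)) := by
      rw [hrdef, ← Complex.exp_int_mul]
      congr 1
      push_cast
      ring
    rw [jtpG, h2, h3]
    ring
  set w : ℂ := z + τ / 2 + 1 / 2 with hwdef
  have hterm2 : ∀ n : ℤ, jtpG r ζ n = jacobiTheta₂_term n w τ := by
    intro n
    rw [jtpG, jacobiTheta₂_term, hζdef, hrdef, ← Complex.exp_pi_mul_I,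
      ← Complex.exp_int_mul, ← Complex.exp_int_mul, ← Complex.exp_int_mul,
      ← Complex.exp_add, ← Complex.exp_add]
    congr 1
    rw [hwdef]
    push_cast
    ring
  have hsum : Summable fun n : ℤ => ‖jtpG r ζ n‖ := by
    have he : (fun n : ℤ => ‖jtpG r ζ n‖) = fun n => ‖jacobiTheta₂_term n w τ‖ := by
      funext n
      rw [hterm2]
    rw [he]
    refine Summable.of_nonneg_of_le (fun n => norm_nonneg _)
      (fun n => norm_jacobiTheta₂_term_le hτ (le_refl |w.im|) (le_refl τ.im) n) ?_
    simpa using summable_pow_mul_jacobiTheta₂_term_bound |w.im| hτ 0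
  have hkey := jtp_key hq hqr hr hζ0 hsum
  rw [tsum_congr hterm, hkey]
  ring

theorem jacobi_triple_product (z τ : ℂ) (hτ : 0 < τ.im) :
    Complex.I * Complex.exp (Real.pi * Complex.I * τ / 4) *
        Complex.exp (Real.pi * Complex.I * z) *
        ∑' n : ℤ, (-1 : ℂ) ^ n *
          Complex.exp (Real.pi * Complex.I * τ * (n ^ 2 + n)) *
          Complex.exp (2 * Real.pi * Complex.I * z * n)
      = jTheta z τ := by
  rw [jTheta]
  exact jacobi_triple_product' z τ hτ
end

section
/- Let ε ∈ ℂ with Re(ε) > 0, let b, c be positive integers with b/c > 1, and let z ∈ (0,1). Then |sinh(2π²z/ε)/sinh(2π²bz/(cε)) − e^{(2π²/ε)z(1−b/c)}| ≤ |e^{(2π²/ε)z(1−b/c)}| · (|e^{-4π²z/ε}| + |e^{-4π²bz/(cε)}|/(1 − |e^{-4π²bz/(cε)}|) + |e^{-4π²z/ε}|·|e^{-4π²bz/(cε)}|/(1 − |e^{-4π²bz/(cε)}|)); in particular sinh(2π²z/ε)/sinh(2π²bz/(cε)) = e^{(2π²/ε)z(1−b/c)}(1 + O(e^{-4π²z·Re(1/ε)}))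 as Re(1/ε) → ∞ with z fixed. -/
open Complex Filter

/-! Writing `sinh w = eʷ (1 - e⁻²ʷ) / 2`, the quotient `sinh A / sinh B` equals
`e^(A - B) (1 - u) / (1 - v)` with `u = e⁻²ᴬ`, `v = e⁻²ᴮ`, and `(1 - u) / (1 - v) - 1 = (v - u) / (1 - v)`.
Since `Re (1 / ε) > 0` we have `‖v‖ < 1`, so `‖1 - v‖ ≥ 1 - ‖v‖`, which gives the bound. -/

theorem Complex.sinh_eq_exp_mul_one_sub (w : ℂ) : sinh w = exp w * (1 - exp (-2 * w)) / 2 := by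
  have h : exp (-w) = exp w * exp (-2 * w) := by rw [← exp_add]; ring_nf
  linear_combination (two_sinh w - h) / 2

theorem Complex.sinh_div_sinh (A B : ℂ) (hB : exp (-2 * B) ≠ 1) :
    sinh A / sinh B = exp (A - B) * ((1 - exp (-2 * A)) / (1 - exp (-2 * B))) := by
  have hB' : 1 - exp (-2 * B) ≠ 0 := sub_ne_zero.mpr hB.symm
  rw [sinh_eq_exp_mul_one_sub, sinh_eq_exp_mul_one_sub, exp_sub]
  field_simp [exp_ne_zero]

theorem norm_div_one_sub_sub_one_le {𝕜 : Type*} [NormedField 𝕜] (u v : 𝕜) (hv : ‖v‖ < 1) :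
    ‖(1 - u) / (1 - v) - 1‖ ≤ (‖u‖ + ‖v‖) / (1 - ‖v‖) := by
  have hv1 : 1 - v ≠ 0 := fun h => by simp [(sub_eq_zero.mp h).symm] at hv
  have hden : 1 - ‖v‖ ≤ ‖1 - v‖ := by simpa using norm_sub_norm_le (1 : 𝕜) v
  calc ‖(1 - u) / (1 - v) - 1‖ = ‖v - u‖ / ‖1 - v‖ := by
        rw [div_sub_one hv1, sub_sub_sub_cancel_left, norm_div]
    _ ≤ (‖u‖ + ‖v‖) / (1 - ‖v‖) :=
        div_le_div₀ (by positivity) ((norm_sub_le v u).trans_eq (add_comm _ _))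
          (by linarith) hden

theorem Complex.norm_exp_neg_div_lt_one {ε : ℂ} (hε : 0 < ε.re) {r : ℝ} (hr : 0 < r) :
    ‖exp (-r / ε)‖ < 1 := by
  have hre : 0 < ((r : ℂ) / ε).re := by
    rw [div_re, ofReal_re, ofReal_im, zero_mul, zero_div, add_zero]
    exact div_pos (mul_pos hr hε) (normSq_pos.mpr fun h => by simp [h] at hε)
  rw [norm_exp, Real.exp_lt_one_iff, neg_div, neg_re]
  exact neg_neg_of_pos hre

theorem sinh_quotient_bound_general (ε : ℂ) (hε : 0 < ε.re) (b c : ℕ+)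
    (z : ℝ) (hz0 : 0 < z) :
    ‖Complex.sinh (2 * Real.pi ^ 2 * z / ε) /
          Complex.sinh (2 * Real.pi ^ 2 * b * z / (c * ε))
        - Complex.exp ((2 * Real.pi ^ 2 / ε) * z * (1 - (b : ℂ) / (c : ℂ)))‖
      ≤ ‖Complex.exp ((2 * Real.pi ^ 2 / ε) * z * (1 - (b : ℂ) / (c : ℂ)))‖ *
        (‖Complex.exp (-(4 * Real.pi ^ 2 * z) / ε)‖
          + ‖Complex.exp (-(4 * Real.pi ^ 2 * b * z) / (c * ε))‖ /
              (1 - ‖Complex.exp (-(4 * Real.pi ^ 2 * b * z) / (c * ε))‖)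
          + ‖Complex.exp (-(4 * Real.pi ^ 2 * z) / ε)‖ *
              ‖Complex.exp (-(4 * Real.pi ^ 2 * b * z) / (c * ε))‖ /
              (1 - ‖Complex.exp (-(4 * Real.pi ^ 2 * b * z) / (c * ε))‖)) := by
  set A : ℂ := 2 * Real.pi ^ 2 * z / ε
  set B : ℂ := 2 * Real.pi ^ 2 * b * z / (c * ε)
  have hu : exp (-(4 * Real.pi ^ 2 * z) / ε) = exp (-2 * A) := by congr 1; ring
  have hv : exp (-(4 * Real.pi ^ 2 * b * z) / (c * ε)) = exp (-2 * B) := by congr 1; ring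
  have hE : exp ((2 * Real.pi ^ 2 / ε) * z * (1 - (b : ℂ) / (c : ℂ))) = exp (A - B) := by
    congr 1; simp only [A, B]; field_simp
  have hv1 : ‖exp (-2 * B)‖ < 1 := by
    rw [← hv]
    convert norm_exp_neg_div_lt_one hε (r := 4 * Real.pi ^ 2 * b * z / c) (by positivity) using 2
    push_cast; field_simp
  have hsinh := sinh_div_sinh A B fun h => by rw [h] at hv1; simp at hv1
  rw [hu, hv, hE, hsinh, ← mul_sub_one, norm_mul]
  gcongr
  refine (norm_div_one_sub_sub_one_le _ _ hv1).trans_eq ?_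
  generalize ‖exp (-2 * A)‖ = x, ‖exp (-2 * B)‖ = y at hv1 ⊢
  have : 1 - y ≠ 0 := by linarith
  field_simp
  ring

theorem sinh_quotient_bound (ε : ℂ) (hε : 0 < ε.re) (b c : ℕ+)
    (hbc : 1 < (b : ℝ) / (c : ℝ)) (z : ℝ) (hz0 : 0 < z) (hz1 : z < 1) :
    ‖Complex.sinh (2 * Real.pi ^ 2 * z / ε) /
          Complex.sinh (2 * Real.pi ^ 2 * b * z / (c * ε))
        - Complex.exp ((2 * Real.pi ^ 2 / ε) * z * (1 - (b : ℂ) / (c : ℂ)))‖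
      ≤ ‖Complex.exp ((2 * Real.pi ^ 2 / ε) * z * (1 - (b : ℂ) / (c : ℂ)))‖ *
        (‖Complex.exp (-(4 * Real.pi ^ 2 * z) / ε)‖
          + ‖Complex.exp (-(4 * Real.pi ^ 2 * b * z) / (c * ε))‖ /
              (1 - ‖Complex.exp (-(4 * Real.pi ^ 2 * b * z) / (c * ε))‖)
          + ‖Complex.exp (-(4 * Real.pi ^ 2 * z) / ε)‖ *
              ‖Complex.exp (-(4 * Real.pi ^ 2 * b * z) / (c * ε))‖ /
              (1 - ‖Complex.exp (-(4 * Real.pi ^ 2 * b * z) / (c * ε))‖)) :=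
  sinh_quotient_bound_general ε hε b c z hz0
end
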